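/- Fix a school choice problem, a tier structure t, and a TDA Nash equilibrium Q. Then for each student i, running DA on the reshuffled profile Q̃ gives i the same assignment as running DA with i reporting truthfully against the others' reshuffled reports: DA(Q̃_i, Q̃_{-i})(i) = DA(R_i, Q̃_{-i})(i). -/

import Mathlib

set_option linter.unusedSectionVars false

namespace SchoolChoice

/-- A strict preference over `S ∪ {self}`, encoded by an injective ranking function on
`Option S`; `none` denotes being unmatched (the student himself), and a smaller rank
means more preferred. Injective rankings on a finite set are exactly strict linear orders. -/
structure Pref (S : Type) where
  rank : Option S → ℕ
  inj : Function.Injective rank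

/-- Quotas together with strict priorities of the schools: `prank s` ranks the students
at school `s`, a smaller rank meaning higher priority. -/
structure Prio (I S : Type) where
  quota : S → ℕ
  prank : S → I → ℕ
  inj : ∀ s, Function.Injective (prank s)

variable {I S : Type} [Fintype I] [Fintype S] [DecidableEq I] [DecidableEq S]

/-- `i` has strictly higher priority than `j` at school `s`. -/
def Prio.higher (E : Prio I S) (s : S) (i j : I) : Prop :=
  E.prank s i < E.prank s j

/-- A matching assigns to each student a school or himself (`none`). -/
abbrev Matching (I S : Type) := I → Option S

/-- The set of students assigned to school `s`. -/
def assigned (μ : Matching I S) (s : S) : Finset I :=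
  Finset.univ.filter (fun i => μ i = some s)

/-- Quotas are respected. -/
def Feasible (E : Prio I S) (μ : Matching I S) : Prop :=
  ∀ s, (assigned μ s).card ≤ E.quota s

/-- `(i, s)` is a blocking pair of `μ` with respect to preferences `R`:
`i` strictly prefers `s` to his assignment, and either `s` has an empty seat
(wastefulness) or some student assigned to `s` has lower priority than `i`
(justified envy). -/
def Blocks (E : Prio I S) (R : I → Pref S) (μ : Matching I S) (i : I) (s : S) : Prop :=
  (R i).rank (some s) < (R i).rank (μ i) ∧
    ((assigned μ s).card < E.quota s ∨ ∃ j, μ j = some s ∧ E.higher s i j)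

/-- Individual rationality: every student weakly prefers his assignment to being unmatched. -/
def IndivRat (R : I → Pref S) (μ : Matching I S) : Prop :=
  ∀ i, (R i).rank (μ i) ≤ (R i).rank none

/-- Non-wastefulness: no student prefers a school with an empty seat to his assignment. -/
def NonWasteful (E : Prio I S) (R : I → Pref S) (μ : Matching I S) : Prop :=
  ∀ i s, (R i).rank (some s) < (R i).rank (μ i) → E.quota s ≤ (assigned μ s).card

/-- Stability: feasible, individually rational, and no blocking pair
(no justified envy and non-wasteful). -/
def Stable (E : Prio I S) (R : I → Pref S) (μ : Matching I S) : Prop :=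
  Feasible E μ ∧ IndivRat R μ ∧ ∀ i s, ¬ Blocks E R μ i s

/-- The student-optimal stable matching for the (reported) preferences. -/
def StudentOptimal (E : Prio I S) (R : I → Pref S) (μ : Matching I S) : Prop :=
  Stable E R μ ∧ ∀ ν, Stable E R ν → ∀ i, (R i).rank (μ i) ≤ (R i).rank (ν i)

open Classical in
/-- The student-proposing deferred acceptance mechanism: by the Gale–Shapley theorem its
outcome is the (unique) student-optimal stable matching of the reported preferences. -/
noncomputable def DA (E : Prio I S) (R : I → Pref S) : Matching I S :=
  if h : ∃ μ, StudentOptimal E R μ then h.choose else fun _ => none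

/-- A strict upper bound for the values of a ranking. -/
noncomputable def bnd (p : Pref S) : ℕ := (Finset.univ.sup p.rank) + 1

lemma rank_lt_bnd (p : Pref S) (x : Option S) : p.rank x < bnd p :=
  Nat.lt_succ_of_le (Finset.le_sup (Finset.mem_univ x))

private lemma mul_add_lt {a K B r : ℕ} (ha : a ≤ K) (hr : r < B) :
    a * B + r < (K + 1) * B := by
  calc a * B + r < a * B + B := by omega
    _ = (a + 1) * B := by ring
    _ ≤ (K + 1) * B := Nat.mul_le_mul (by omega) le_rfl

/-- Is an alternative "inside the market" `A`?  `none` always is. -/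
def goodB (A : S → Prop) [DecidablePred A] : Option S → Bool
  | none => true
  | some s => decide (A s)

/-- The preference truncated to the set of schools `A`: schools in `A` (and the outside
option `none`) keep their relative order, while all schools outside `A` are pushed below
`none` (become unacceptable), keeping their relative order among themselves. -/
noncomputable def trunc (A : S → Prop) [DecidablePred A] (p : Pref S) : Pref S where
  rank x := (if goodB A x then 0 else bnd p) + p.rank x
  inj := by
    intro x y h
    by_cases hx : goodB A x <;> by_cases hy : goodB A y <;>
      simp only [hx, hy, if_true, if_false, Bool.false_eq_true, zero_add] at h
    · exact p.inj h
    · have := rank_lt_bnd p x; omega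
    · have := rank_lt_bnd p y; omega
    · exact p.inj (by omega)

/-- The reshuffled preference with respect to a tier structure `t`: acceptable schools
are grouped by tier in increasing tier order (keeping the original relative order within
each tier) above `none`, and all unacceptable schools are placed below `none`. -/
noncomputable def reshuffle (t : S → ℕ) (p : Pref S) : Pref S where
  rank x :=
    Option.elim x ((Finset.univ.sup t + 1) * bnd p)
      (fun s =>
        if p.rank (some s) < p.rank none then t s * bnd p + p.rank (some s)
        else (Finset.univ.sup t + 1) * bnd p + 1 + p.rank (some s))
  inj := by
    have hB : ∀ x, p.rank x < bnd p := rank_lt_bnd p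
    have hK : ∀ s : S, t s ≤ Finset.univ.sup t := fun s => Finset.le_sup (Finset.mem_univ s)
    intro x y h
    rcases x with _ | s <;> rcases y with _ | s' <;>
      simp only [Option.elim_none, Option.elim_some] at h
    · rfl
    · by_cases hy : p.rank (some s') < p.rank none <;> simp only [hy, if_true, if_false] at h
      · have := mul_add_lt (hK s') (hB (some s')); omega
      · omega
    · by_cases hx : p.rank (some s) < p.rank none <;> simp only [hx, if_true, if_false] at h
      · have := mul_add_lt (hK s) (hB (some s)); omega
      · omega
    · by_cases hx : p.rank (some s) < p.rank none <;>
        by_cases hy : p.rank (some s') < p.rank none <;>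
        simp only [hx, hy, if_true, if_false] at h
      · have hts : t s = t s' := by
          rcases Nat.lt_trichotomy (t s) (t s') with h1 | h1 | h1
          · have h2 : t s * bnd p + p.rank (some s) < t s' * bnd p + p.rank (some s') := by
              have h3 := mul_add_lt (a := t s) (K := t s' - 1) (B := bnd p) (by omega) (hB (some s))
              have h4 : (t s' - 1 + 1) * bnd p = t s' * bnd p := by congr 1; omega
              omega
            omega
          · exact h1
          · have h2 : t s' * bnd p + p.rank (some s') < t s * bnd p + p.rank (some s) := by
              have h3 := mul_add_lt (a := t s') (K := t s - 1) (B := bnd p) (by omega) (hB (some s'))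
              have h4 : (t s - 1 + 1) * bnd p = t s * bnd p := by congr 1; omega
              omega
            omega
        rw [hts] at h
        exact p.inj (by omega)
      · have := mul_add_lt (hK s) (hB (some s)); omega
      · have := mul_add_lt (hK s') (hB (some s')); omega
      · exact p.inj (by omega)

/-- A tier structure assigning each school a tier in `{1, …, T}`, each tier nonempty. -/
def IsTierStructure (t : S → ℕ) (T : ℕ) : Prop :=
  (∀ s, 1 ≤ t s ∧ t s ≤ T) ∧ ∀ k, 1 ≤ k → k ≤ T → ∃ s, t s = k

/-- Rounds `1, …, k` of the tiered deferred acceptance mechanism: in round `k` the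
students left unmatched so far participate in the DA mechanism with their preferences
truncated to the tier-`k` schools (already matched students participate with nothing
acceptable); students matched in earlier rounds keep their assignments. -/
noncomputable def TDAaux (E : Prio I S) (t : S → ℕ) (Q : I → Pref S) : ℕ → Matching I S
  | 0 => fun _ => none
  | k + 1 => fun i =>
      match TDAaux E t Q k i with
      | some s => some s
      | none =>
          DA E (fun j =>
            if TDAaux E t Q k j = none then trunc (fun s => t s = k + 1) (Q j)
            else trunc (fun _ => False) (Q j)) i

/-- The tiered deferred acceptance mechanism under tier structure `t`. -/
noncomputable def TDA (E : Prio I S) (t : S → ℕ) (Q : I → Pref S) : Matching I S :=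
  TDAaux E t Q (Finset.univ.sup t)

/-- `Q` is a (pure) Nash equilibrium of the preference revelation game induced by the
mechanism `f` when the true preferences are `R`: no student can obtain a school he truly
strictly prefers by unilaterally changing his report. -/
def NashEq (R : I → Pref S) (f : (I → Pref S) → Matching I S) (Q : I → Pref S) : Prop :=
  ∀ (i : I) (Qi' : Pref S),
    (R i).rank (f Q i) ≤ (R i).rank (f (Function.update Q i Qi') i)

/-- `μ` is a Nash equilibrium outcome of the revelation game induced by `f` at true
preferences `R`. -/
def NashOutcome (R : I → Pref S) (f : (I → Pref S) → Matching I S) (μ : Matching I S) : Prop :=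
  ∃ Q, NashEq R f Q ∧ f Q = μ

/-- The preference `p` is aligned with the tier structure `t`: a (weakly) more preferred
school always lies in a weakly earlier tier. -/
def AlignedPref (t : S → ℕ) (p : Pref S) : Prop :=
  ∀ s s' : S, p.rank (some s) ≤ p.rank (some s') → t s ≤ t s'

/-- `p` lists exactly the school in `o` (if any) as acceptable. -/
def OnlyAcceptable (p : Pref S) (o : Option S) : Prop :=
  ∀ s : S, (p.rank (some s) < p.rank none ↔ o = some s)

/-- An Ergin cycle of the priority structure among the schools in `A`. -/
def Cycle (E : Prio I S) (A : S → Prop) : Prop :=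
  ∃ a b : S, A a ∧ A b ∧ a ≠ b ∧ ∃ i j k : I,
    E.higher a i j ∧ E.higher a j k ∧ E.higher b k i ∧
    ∃ Ia Ib : Finset I, Disjoint Ia Ib ∧
      (∀ l ∈ Ia, l ≠ i ∧ l ≠ j ∧ l ≠ k ∧ E.higher a l j) ∧
      (∀ l ∈ Ib, l ≠ i ∧ l ≠ j ∧ l ≠ k ∧ E.higher b l i) ∧
      Ia.card = E.quota a - 1 ∧ Ib.card = E.quota b - 1

/-- Within-tier acyclicity of a generalized priority structure: no Ergin cycle among the
schools of any single tier. -/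
def WithinTierAcyclic (E : Prio I S) (t : S → ℕ) : Prop :=
  ∀ k : ℕ, ¬ Cycle E (fun s => t s = k)

/-- The (strict) preference `pr` of school `s` over sets of students is a responsive
extension of its priorities. -/
def Responsive (E : Prio I S) (s : S) (pr : Finset I → Finset I → Prop) : Prop :=
  ∀ (J : Finset I) (i j : I), i ∉ J → j ∉ J → E.higher s i j →
    pr (insert i J) (insert j J)

/-- `t` is a refinement of `t'`: `t'` ranks `a` in a strictly later tier than `b` only
if `t` does. -/
def Refines (t t' : S → ℕ) : Prop :=
  ∀ a b : S, t' b < t' a → t b < t a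


/-!
Round `k` of TDA reproduces the tier-`k` part of `DA(Q̃)`: that part is stable in the round's
market, and patching a round outcome into `DA(Q̃)` gives a matching stable for `Q̃`, so by
student-optimality of both the round outcome can be no better. Hence `TDA(Q) = DA(Q̃)`, and a
TDA deviation `p` of `i` is the DA deviation `p̃`. Reporting only `x = DA(R_i, Q̃_{-i})(i)` as
acceptable secures `x` (Roth–Sotomayor 4.8; reshuffling keeps the acceptable set), so the Nash
property gives `DA(Q̃)(i) ⪰ x`, and strategy-proofness of DA gives the converse.
-/

open Finset Function

instance (E : Prio I S) (s : S) : DecidableRel (E.higher s) := fun i j =>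
  inferInstanceAs (Decidable (E.prank s i < E.prank s j))

lemma mem_assigned {μ : Matching I S} {s : S} {i : I} : i ∈ assigned μ s ↔ μ i = some s := by
  simp [assigned]

lemma Pref.rank_lt_of_le_of_ne (p : Pref S) {x y : Option S} (h : p.rank x ≤ p.rank y)
    (hne : x ≠ y) : p.rank x < p.rank y :=
  lt_of_le_of_ne h (p.inj.ne hne)

lemma IndivRat.rank_lt_none {R : I → Pref S} {μ : Matching I S} (h : IndivRat R μ) {i : I}
    {s : S} (hi : μ i = some s) : (R i).rank (some s) < (R i).rank none :=
  (R i).rank_lt_of_le_of_ne (hi ▸ h i) (by simp)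

section Stability

variable {E : Prio I S} {P P' : I → Pref S} {μ ν : Matching I S}

lemma blocks_of_assigned_eq {j : I} {s : S} (hpref : (P j).rank (some s) < (P j).rank (ν j))
    (hseat : (assigned μ s).card < E.quota s ∨ ∃ l, μ l = some s ∧ E.higher s j l)
    (hass : assigned μ s = assigned ν s) : Blocks E P ν j s := by
  refine ⟨hpref, hseat.imp (hass ▸ ·) fun ⟨l, hl, hjl⟩ => ⟨l, ?_, hjl⟩⟩
  rw [← mem_assigned, ← hass, mem_assigned]
  exact hl

lemma Stable.of_upper_contour (h : Stable E P' μ) (hIR : IndivRat P μ)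
    (hup : ∀ j s, (P j).rank (some s) < (P j).rank (μ j) →
      (P' j).rank (some s) < (P' j).rank (μ j)) :
    Stable E P μ :=
  ⟨h.1, hIR, fun j s hb => h.2.2 j s ⟨hup j s hb.1, hb.2⟩⟩

lemma Stable.of_eq_off {i : I} (h : Stable E P' μ) (hoff : ∀ j, j ≠ i → P j = P' j)
    (hIR : (P i).rank (μ i) ≤ (P i).rank none)
    (hup : ∀ s, (P i).rank (some s) < (P i).rank (μ i) →
      (P' i).rank (some s) < (P' i).rank (μ i)) :
    Stable E P μ := by
  refine h.of_upper_contour (fun j => ?_) (fun j => ?_)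
  · by_cases hj : j = i
    · exact hj ▸ hIR
    · exact hoff j hj ▸ h.2.1 j
  · by_cases hj : j = i
    · exact hj ▸ hup
    · exact fun s hs => hoff j hj ▸ hs

end Stability

section GaleShapley

variable (E : Prio I S) (P : I → Pref S)

lemma exists_best (i : I) (r : Finset S) :
    ∃ x : Option S, (∀ s, x = some s → s ∉ r) ∧
      ∀ y : Option S, (∀ s, y = some s → s ∉ r) → (P i).rank x ≤ (P i).rank y := by
  classical
  obtain ⟨x, hx, hmin⟩ := (univ.filter fun x : Option S => ∀ s, x = some s → s ∉ r).exists_min_image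
    (P i).rank ⟨none, by simp⟩
  exact ⟨x, (mem_filter.1 hx).2, fun y hy => hmin y (mem_filter.2 ⟨mem_univ y, hy⟩)⟩

noncomputable def best (i : I) (r : Finset S) : Option S := (exists_best P i r).choose

lemma best_notMem {i : I} {r : Finset S} {s : S} (h : best P i r = some s) : s ∉ r :=
  (exists_best P i r).choose_spec.1 s h

lemma rank_best_le {i : I} {r : Finset S} {y : Option S} (hy : ∀ s, y = some s → s ∉ r) :
    (P i).rank (best P i r) ≤ (P i).rank y :=
  (exists_best P i r).choose_spec.2 y hy

/-- The tentative matching of deferred acceptance once the schools in `σ i` have rejected `i`: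
everyone holds his favourite remaining option. -/
noncomputable def proposals (σ : I → Finset S) : Matching I S := fun i => best P i (σ i)

/-- The invariant of deferred acceptance. Its first clause makes the terminal matching stable,
its second makes it student-optimal. -/
def Justified (σ : I → Finset S) : Prop :=
  (∀ i, ∀ s ∈ σ i, E.quota s ≤ ((assigned (proposals P σ) s).filter (E.higher s · i)).card) ∧
    ∀ ν, Stable E P ν → ∀ i, ∀ s ∈ σ i, ν i ≠ some s

lemma justified_empty : Justified E P fun _ => ∅ := by
  simp [Justified]

variable {E P}

lemma studentOptimal_proposals {σ : I → Finset S} (h : Justified E P σ)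
    (hF : Feasible E (proposals P σ)) : StudentOptimal E P (proposals P σ) := by
  refine ⟨⟨hF, fun i => rank_best_le P (by simp), fun i s ⟨hlt, hseat⟩ => ?_⟩,
    fun ν hν i => rank_best_le P fun s hs => (h.2 ν hν i s · hs)⟩
  have hs : s ∈ σ i := by
    by_contra hs
    exact absurd (rank_best_le P (r := σ i) (i := i) (y := some s) (by simpa using hs))
      (not_le.2 hlt)
  have hq := h.1 i s hs
  have hcap := hF s
  set A := assigned (proposals P σ) s
  have hsub : (A.filter (E.higher s · i)).card ≤ A.card := card_le_card (filter_subset _ _)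
  rcases hseat with hfree | ⟨j, hj, hij⟩
  · omega
  · have hjA : insert j (A.filter (E.higher s · i)) ⊆ A :=
      insert_subset (mem_assigned.2 hj) (filter_subset _ _)
    have hjnot : j ∉ A.filter (E.higher s · i) := fun hj' =>
      lt_asymm hij (mem_filter.1 hj').2
    have := card_le_card hjA
    rw [card_insert_of_notMem hjnot] at this
    omega

def reject (σ : I → Finset S) (w : I) (s : S) : I → Finset S := update σ w (insert s (σ w))

lemma mem_reject {σ : I → Finset S} {w i : I} {s s' : S} :
    s' ∈ reject σ w s i ↔ s' ∈ σ i ∨ (i = w ∧ s' = s) := by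
  by_cases hi : i = w
  · subst hi
    simp [reject, or_comm]
  · simp [reject, hi]

lemma sum_card_lt_sum_card_reject {σ : I → Finset S} {w : I} {s : S} (hs : s ∉ σ w) :
    ∑ i, (σ i).card < ∑ i, (reject σ w s i).card := by
  refine sum_lt_sum (fun i _ => card_le_card fun s' hs' => mem_reject.2 (Or.inl hs'))
    ⟨w, mem_univ w, ?_⟩
  simp [reject, card_insert_of_notMem hs]

lemma erase_assigned_subset_reject (σ : I → Finset S) (w : I) (s s' : S) :
    (assigned (proposals P σ) s').erase w ⊆ assigned (proposals P (reject σ w s)) s' := by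
  intro j hj
  obtain ⟨hjw, hj⟩ := mem_erase.1 hj
  simpa [mem_assigned, proposals, reject, update_of_ne hjw] using hj

/-- Any stable matching placing `w` at `s` leaves out one of the others, who then blocks it. -/
lemma Justified.ne_of_worst {σ : I → Finset S} (h : Justified E P σ) {s : S} {w : I}
    (hq : E.quota s ≤ ((assigned (proposals P σ) s).erase w).card)
    (hworst : ∀ j ∈ (assigned (proposals P σ) s).erase w, E.higher s j w)
    {ν : Matching I S} (hν : Stable E P ν) : ν w ≠ some s := by
  intro hνw
  obtain ⟨j, hjK, hjs⟩ : ∃ j ∈ (assigned (proposals P σ) s).erase w, ν j ≠ some s := by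
    by_contra! hall
    have hsub : insert w ((assigned (proposals P σ) s).erase w) ⊆ assigned ν s :=
      insert_subset (mem_assigned.2 hνw) fun j hj => mem_assigned.2 (hall j hj)
    have := card_le_card hsub
    rw [card_insert_of_notMem (notMem_erase w _)] at this
    have := hν.1 s
    omega
  have hjs' : proposals P σ j = some s := mem_assigned.1 (mem_of_mem_erase hjK)
  have hle : (P j).rank (some s) ≤ (P j).rank (ν j) :=
    hjs' ▸ rank_best_le P fun s' hs' hmem => h.2 ν hν j s' hmem hs'
  exact hν.2.2 j s ⟨(P j).rank_lt_of_le_of_ne hle (Ne.symm hjs), Or.inr ⟨w, hνw, hworst j hjK⟩⟩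

/-- An over-subscribed school `s` rejects its lowest-priority proposer `w`. -/
lemma Justified.exists_reject {σ : I → Finset S} (h : Justified E P σ) {s : S}
    (hs : E.quota s < (assigned (proposals P σ) s).card) :
    ∃ w, s ∉ σ w ∧ Justified E P (reject σ w s) := by
  set A := assigned (proposals P σ) s
  obtain ⟨w, hwA, hwmax⟩ := A.exists_max_image (E.prank s) (card_pos.1 (by omega))
  have hK : E.quota s ≤ (A.erase w).card := by rw [card_erase_of_mem hwA]; omega
  have hworst : ∀ j ∈ A.erase w, E.higher s j w := fun j hj =>
    lt_of_le_of_ne (hwmax j (mem_of_mem_erase hj)) ((E.inj s).ne (ne_of_mem_erase hj))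
  have hfull : ∀ i, (∀ j ∈ A.erase w, E.higher s j i) → E.quota s ≤
      ((assigned (proposals P (reject σ w s)) s).filter (E.higher s · i)).card := fun i hi =>
    hK.trans (card_le_card fun j hj =>
      mem_filter.2 ⟨erase_assigned_subset_reject σ w s s hj, hi j hj⟩)
  refine ⟨w, best_notMem P (mem_assigned.1 hwA : proposals P σ w = some s),
    fun i s' hs' => ?_, fun ν hν i s' hs' => ?_⟩
  · rcases mem_reject.1 hs' with hold | ⟨rfl, rfl⟩
    · by_cases hwi : w ∈ (assigned (proposals P σ) s').filter (E.higher s' · i)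
      · obtain ⟨hws', hwi⟩ := mem_filter.1 hwi
        obtain rfl : s' = s := Option.some.inj ((mem_assigned.1 hws').symm.trans
          (mem_assigned.1 hwA))
        exact hfull i fun j hj => (hworst j hj).trans hwi
      · refine (h.1 i s' hold).trans (card_le_card fun j hj => ?_)
        have hjw : j ≠ w := fun hjw => hwi (hjw ▸ hj)
        obtain ⟨hj, hji⟩ := mem_filter.1 hj
        exact mem_filter.2 ⟨erase_assigned_subset_reject σ w s s' (mem_erase.2 ⟨hjw, hj⟩), hji⟩
    · exact hfull i hworst
  · rcases mem_reject.1 hs' with hold | ⟨rfl, rfl⟩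
    · exact h.2 ν hν i s' hold
    · exact h.ne_of_worst hK hworst hν

variable (E P)

theorem exists_studentOptimal : ∃ μ, StudentOptimal E P μ := by
  suffices h : ∀ n σ, Fintype.card I * Fintype.card S - ∑ i, (σ i).card = n →
      Justified E P σ → ∃ μ, StudentOptimal E P μ from h _ _ rfl (justified_empty E P)
  intro n
  induction n using Nat.strong_induction_on with
  | _ n ih =>
    intro σ hn hσ
    by_cases hF : Feasible E (proposals P σ)
    · exact ⟨_, studentOptimal_proposals hσ hF⟩
    obtain ⟨s, hs⟩ : ∃ s, E.quota s < (assigned (proposals P σ) s).card := by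
      simpa [Feasible] using hF
    obtain ⟨w, hsw, hσ'⟩ := hσ.exists_reject hs
    have hlt := sum_card_lt_sum_card_reject hsw
    have hbound : ∑ i, (reject σ w s i).card ≤ Fintype.card I * Fintype.card S := by
      simpa using sum_le_sum fun i (_ : i ∈ univ) => card_le_univ (reject σ w s i)
    exact ih _ (by omega) _ rfl hσ'

end GaleShapley

section Preferences

variable {p : Pref S} {s s' : S}

section Trunc

variable {A : S → Prop} [DecidablePred A]

lemma trunc_rank_none : (trunc A p).rank none = p.rank none := by
  simp [trunc, goodB]

lemma trunc_rank_of_mem (h : A s) : (trunc A p).rank (some s) = p.rank (some s) := by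
  simp [trunc, goodB, h]

lemma trunc_acc_iff :
    (trunc A p).rank (some s) < (trunc A p).rank none ↔ A s ∧ p.rank (some s) < p.rank none := by
  by_cases h : A s
  · simp [trunc_rank_of_mem h, trunc_rank_none, h]
  · have := rank_lt_bnd p none
    simp [trunc, goodB, h]
    omega

end Trunc

variable {t : S → ℕ}

lemma reshuffle_rank_of_acc (h : p.rank (some s) < p.rank none) :
    (reshuffle t p).rank (some s) = t s * bnd p + p.rank (some s) := by
  simp [reshuffle, h]

lemma reshuffle_acc_iff :
    (reshuffle t p).rank (some s) < (reshuffle t p).rank none ↔ p.rank (some s) < p.rank none := by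
  refine ⟨fun h => ?_, fun h => ?_⟩
  · by_contra hs
    simp [reshuffle, hs] at h
    omega
  · rw [reshuffle_rank_of_acc h]
    exact mul_add_lt (le_sup (mem_univ s)) (rank_lt_bnd p _)

lemma reshuffle_rank_lt_of_later (hs : p.rank (some s) < p.rank none) {x : Option S}
    (hx : ∀ s', x = some s' → t s < t s') :
    (reshuffle t p).rank (some s) < (reshuffle t p).rank x := by
  rcases x with _ | s'
  · exact reshuffle_acc_iff.2 hs
  by_cases hs' : p.rank (some s') < p.rank none
  · rw [reshuffle_rank_of_acc hs, reshuffle_rank_of_acc hs']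
    have := mul_add_lt (a := t s) (K := t s) le_rfl (rank_lt_bnd p (some s))
    have : (t s + 1) * bnd p ≤ t s' * bnd p := Nat.mul_le_mul_right _ (hx s' rfl)
    omega
  · have := reshuffle_acc_iff (t := t) |>.2 hs
    simp only [reshuffle, Option.elim_none, Option.elim_some, hs', if_false] at this ⊢
    omega

lemma reshuffle_rank_lt_iff_of_tier_eq (hs : p.rank (some s) < p.rank none)
    (hs' : p.rank (some s') < p.rank none) (h : t s = t s') :
    (reshuffle t p).rank (some s) < (reshuffle t p).rank (some s') ↔
      p.rank (some s) < p.rank (some s') := by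
  rw [reshuffle_rank_of_acc hs, reshuffle_rank_of_acc hs', h]
  omega

lemma tier_le_of_reshuffle_rank_lt (hs' : p.rank (some s') < p.rank none)
    (h : (reshuffle t p).rank (some s) < (reshuffle t p).rank (some s')) : t s ≤ t s' :=
  not_lt.1 fun hlt => (reshuffle_rank_lt_of_later hs' (by simpa using hlt)).asymm h

variable {x : Option S}

lemma OnlyAcceptable.reshuffle (hp : OnlyAcceptable p x) : OnlyAcceptable (reshuffle t p) x :=
  fun s => reshuffle_acc_iff.trans (hp s)

lemma OnlyAcceptable.rank_le_none (hp : OnlyAcceptable p x) : p.rank x ≤ p.rank none := by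
  cases x with
  | none => exact le_rfl
  | some s => exact ((hp s).2 rfl).le

lemma OnlyAcceptable.rank_le (hp : OnlyAcceptable p x) {y : Option S}
    (hy : p.rank y ≤ p.rank none) : p.rank x ≤ p.rank y := by
  cases y with
  | none => exact hp.rank_le_none
  | some s => exact ((hp s).1 (p.rank_lt_of_le_of_ne hy (by simp))).symm ▸ le_rfl

lemma onlyAcceptable_trunc (hx : p.rank x ≤ p.rank none) :
    OnlyAcceptable (trunc (fun s => x = some s) p) x := by
  intro s
  rw [trunc_acc_iff]
  refine ⟨And.left, fun hs => ⟨hs, ?_⟩⟩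
  subst hs
  exact p.rank_lt_of_le_of_ne hx (by simp)

end Preferences

section DeferredAcceptance

variable (E : Prio I S) (P : I → Pref S)

theorem DA_studentOptimal : StudentOptimal E P (DA E P) := by
  rw [DA, dif_pos (exists_studentOptimal E P)]
  exact (exists_studentOptimal E P).choose_spec

lemma DA_stable : Stable E P (DA E P) := (DA_studentOptimal E P).1

variable {E P}

lemma rank_DA_le {ν : Matching I S} (hν : Stable E P ν) (i : I) :
    (P i).rank (DA E P i) ≤ (P i).rank (ν i) :=
  (DA_studentOptimal E P).2 ν hν i

lemma card_assigned_DA_le {ν : Matching I S} (hν : Stable E P ν) (s : S) :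
    (assigned (DA E P) s).card ≤ (assigned ν s).card := by
  by_contra! hlt
  obtain ⟨i, hi, hni⟩ := exists_mem_notMem_of_card_lt_card hlt
  have hi : DA E P i = some s := mem_assigned.1 hi
  have hni : ν i ≠ some s := fun h => hni (mem_assigned.2 h)
  exact hν.2.2 i s ⟨(P i).rank_lt_of_le_of_ne (hi ▸ rank_DA_le hν i) (Ne.symm hni),
    Or.inl (hlt.trans_le ((DA_stable E P).1 s))⟩

lemma card_unmatched_add_sum_card_assigned (μ : Matching I S) :
    (univ.filter (μ · = none)).card + ∑ s, (assigned μ s).card = Fintype.card I := by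
  have := card_eq_sum_card_fiberwise (s := univ) (t := univ) (f := μ) fun _ _ => mem_univ _
  rw [Fintype.sum_option] at this
  simpa [card_univ, assigned] using this.symm

/-- The rural hospitals theorem. -/
theorem DA_eq_none_iff {ν : Matching I S} (hν : Stable E P ν) (i : I) :
    DA E P i = none ↔ ν i = none := by
  have hsub : univ.filter (DA E P · = none) ⊆ univ.filter (ν · = none) := by
    intro j hj
    rw [mem_filter] at hj ⊢
    refine ⟨mem_univ j, Option.eq_none_iff_forall_ne_some.2 fun s hs => ?_⟩
    have := rank_DA_le hν j
    rw [hj.2, hs] at this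
    exact absurd (hν.2.1.rank_lt_none hs) (not_lt.2 this)
  have hcard : (univ.filter (ν · = none)).card ≤ (univ.filter (DA E P · = none)).card := by
    have := card_unmatched_add_sum_card_assigned (DA E P)
    have := card_unmatched_add_sum_card_assigned ν
    have := sum_le_sum fun s (_ : s ∈ univ) => card_assigned_DA_le hν s
    omega
  have heq := eq_of_subset_of_card_le hsub hcard
  simpa using congrArg (i ∈ ·) heq

variable {i : I} {p : Pref S} {x : Option S}

/-- Roth–Sotomayor, Lemma 4.8. -/
theorem DA_update_of_onlyAcceptable (hx : DA E P i = x) (hp : OnlyAcceptable p x) :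
    DA E (update P i p) i = x := by
  have hst : Stable E (update P i p) (DA E P) := by
    refine (DA_stable E P).of_eq_off (i := i) (fun j hj => update_of_ne hj p P) ?_ ?_ <;>
      simp only [update_self, hx]
    · exact hp.rank_le_none
    · exact fun s hs => absurd (hp.rank_le (hs.le.trans hp.rank_le_none)) (not_le.2 hs)
  have hopt := rank_DA_le hst i
  have hIR := (DA_stable E (update P i p)).2.1 i
  simp only [update_self, hx] at hopt hIR
  exact p.inj (le_antisymm hopt (hp.rank_le hIR))

/-- Were `i` unmatched, the outcome would be stable also when `i` lists only `s`, a report that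
secures `s`; the rural hospitals theorem forbids this. -/
lemma DA_update_ne_none {r p : Pref S} {s : S} (hs : DA E (update P i r) i = some s)
    (hp : p.rank (some s) < p.rank none) : DA E (update P i p) i ≠ none := by
  intro hnone
  set q := trunc (fun b => some s = some b) r
  have hq : OnlyAcceptable q (some s) :=
    onlyAcceptable_trunc (by simpa [hs] using (DA_stable E (update P i r)).2.1 i)
  have honly : DA E (update P i q) i = some s := by
    simpa using DA_update_of_onlyAcceptable hs hq
  have hst : Stable E (update P i q) (DA E (update P i p)) := by
    refine (DA_stable E (update P i p)).of_eq_off (i := i)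
      (fun j hj => by simp [update_of_ne hj]) ?_ ?_ <;> simp only [update_self, hnone]
    · exact le_rfl
    · intro b hb
      obtain rfl := Option.some.inj ((hq b).1 hb)
      exact hp
  simp [(DA_eq_none_iff hst i).2 hnone] at honly

/-- Strategy-proofness: if a report secured `s` better than `DA(P)(i)`, truncating `P i` just
below `s` would still get `i` matched, hence at least `s`, in a matching stable for `P`. -/
theorem DA_strategyproof (r : Pref S) :
    (P i).rank (DA E P i) ≤ (P i).rank (DA E (update P i r) i) := by
  by_contra! hlt
  have hIR := (DA_stable E P).2.1 i
  obtain ⟨s, hs⟩ : ∃ s, DA E (update P i r) i = some s := by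
    refine Option.ne_none_iff_exists'.1 fun hnone => ?_
    rw [hnone] at hlt
    omega
  have hsacc : (P i).rank (some s) < (P i).rank none := hs ▸ hlt.trans_le hIR
  set T := trunc (fun b => (P i).rank (some b) ≤ (P i).rank (some s)) (P i)
  have hT : ∀ c, (P i).rank (some c) ≤ (P i).rank (some s) →
      T.rank (some c) = (P i).rank (some c) := fun c hc => trunc_rank_of_mem hc
  obtain ⟨b, hb⟩ := Option.ne_none_iff_exists'.1
    (DA_update_ne_none hs (p := T) (trunc_acc_iff.2 ⟨le_rfl, hsacc⟩))
  have hbT : T.rank (some b) < T.rank none := by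
    simpa using (DA_stable E (update P i T)).2.1.rank_lt_none hb
  have hbs : (P i).rank (some b) ≤ (P i).rank (some s) := (trunc_acc_iff.1 hbT).1
  have hst : Stable E P (DA E (update P i T)) := by
    refine (DA_stable E (update P i T)).of_eq_off (i := i)
      (fun j hj => (update_of_ne hj T P).symm) ?_ ?_ <;> simp only [update_self, hb]
    · exact hbs.trans hsacc.le
    · intro c hc
      rwa [hT c (hc.le.trans hbs), hT b hbs]
  have := rank_DA_le hst i
  rw [hb] at this
  rw [hs] at hlt
  omega

end DeferredAcceptance

section Tiered

variable {E : Prio I S} {t : S → ℕ} {Q : I → Pref S} {k : ℕ} {U : I → Prop} [DecidablePred U]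

def inTier (t : S → ℕ) (k : ℕ) (μ : Matching I S) : Matching I S := fun j =>
  (μ j).filter (t · = k)

lemma inTier_eq_some_iff {μ : Matching I S} {j : I} {s : S} :
    inTier t k μ j = some s ↔ μ j = some s ∧ t s = k := by
  simp [inTier, Option.filter_eq_some_iff]

lemma inTier_eq_none_iff {μ : Matching I S} {j : I} :
    inTier t k μ j = none ↔ ∀ s, μ j = some s → t s ≠ k := by
  simp [inTier, Option.filter_eq_none_iff]

lemma assigned_inTier {μ : Matching I S} {s : S} (hs : t s = k) :
    assigned (inTier t k μ) s = assigned μ s := by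
  ext j
  simp [mem_assigned, inTier_eq_some_iff, hs]

variable (t Q k U) in
/-- The reports in round `k + 1` of TDA, when `U` is the set of students still unassigned. -/
noncomputable def roundProfile : I → Pref S := fun j =>
  if U j then trunc (fun s => t s = k + 1) (Q j) else trunc (fun _ => False) (Q j)

lemma roundProfile_acc_iff {j : I} {s : S} :
    (roundProfile t Q k U j).rank (some s) < (roundProfile t Q k U j).rank none ↔
      U j ∧ t s = k + 1 ∧ (Q j).rank (some s) < (Q j).rank none := by
  unfold roundProfile
  split_ifs with h <;> simp [trunc_acc_iff, h]

lemma roundProfile_rank_of_tier {j : I} {s : S} (hj : U j) (hs : t s = k + 1) :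
    (roundProfile t Q k U j).rank (some s) = (Q j).rank (some s) := by
  simp only [roundProfile, hj, if_true]
  exact trunc_rank_of_mem hs

lemma stable_roundProfile_inTier {μ : Matching I S}
    (hμ : Stable E (fun j => reshuffle t (Q j)) μ)
    (hU : ∀ j, U j ↔ ∀ s, μ j = some s → k < t s) :
    Stable E (roundProfile t Q k U) (inTier t (k + 1) μ) := by
  have hacc : ∀ j s, μ j = some s → (Q j).rank (some s) < (Q j).rank none :=
    fun j s h => reshuffle_acc_iff.1 (hμ.2.1.rank_lt_none h)
  have hIR : IndivRat (roundProfile t Q k U) (inTier t (k + 1) μ) := by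
    intro j
    rcases hx : inTier t (k + 1) μ j with _ | s
    · exact le_rfl
    obtain ⟨hj, hs⟩ := inTier_eq_some_iff.1 hx
    refine (roundProfile_acc_iff.2 ⟨(hU j).2 fun s' hs' => ?_, hs, hacc j s hj⟩).le
    obtain rfl := Option.some.inj (hj.symm.trans hs')
    omega
  refine ⟨fun s => (card_le_card fun j hj => ?_).trans (hμ.1 s), hIR, fun j s ⟨h1, h2⟩ => ?_⟩
  · exact mem_assigned.2 (inTier_eq_some_iff.1 (mem_assigned.1 hj)).1
  obtain ⟨hUj, hs, hsQ⟩ := roundProfile_acc_iff.1 (h1.trans_le (hIR j))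
  refine hμ.2.2 j s (blocks_of_assigned_eq ?_ h2 (assigned_inTier hs))
  rcases hx : inTier t (k + 1) μ j with _ | s'
  · refine reshuffle_rank_lt_of_later hsQ fun s' hs' => ?_
    have := (hU j).1 hUj s' hs'
    have := inTier_eq_none_iff.1 hx s' hs'
    omega
  · obtain ⟨hj, hs'⟩ := inTier_eq_some_iff.1 hx
    rw [hx, roundProfile_rank_of_tier hUj hs, roundProfile_rank_of_tier hUj hs'] at h1
    rw [hj]
    exact (reshuffle_rank_lt_iff_of_tier_eq hsQ (hacc j s' hj) (hs.trans hs'.symm)).2 h1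

lemma assigned_or_inTier {μ η : Matching I S} (hη : ∀ j s, η j = some s → t s = k + 1)
    (hsame : ∀ j, η j = none ↔ inTier t (k + 1) μ j = none) (s : S) :
    assigned (fun j => (η j).or (μ j)) s =
      if t s = k + 1 then assigned η s else assigned μ s := by
  ext j
  have hnone := hsame j
  rw [inTier_eq_none_iff] at hnone
  split_ifs with hs <;> rw [mem_assigned, mem_assigned] <;> rcases hj : η j with _ | s'
  · simpa using fun h => hnone.1 hj s h hs
  · simp
  · simp
  · obtain ⟨s'', hs'', hts''⟩ : ∃ s'', μ j = some s'' ∧ t s'' = k + 1 := by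
      simpa [hj] using hnone
    simp only [Option.some_or, Option.some.injEq]
    refine ⟨fun h => absurd (h ▸ hη j s' hj) hs, fun h => ?_⟩
    exact absurd (Option.some.inj (hs''.symm.trans h) ▸ hts'') hs

lemma stable_or {μ η : Matching I S} (hμ : Stable E (fun j => reshuffle t (Q j)) μ)
    (hU : ∀ j, U j ↔ ∀ s, μ j = some s → k < t s)
    (hη : Stable E (roundProfile t Q k U) η)
    (hsame : ∀ j, η j = none ↔ inTier t (k + 1) μ j = none) :
    Stable E (fun j => reshuffle t (Q j)) fun j => (η j).or (μ j) := by
  have hηs : ∀ {j s}, η j = some s →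
      U j ∧ t s = k + 1 ∧ (Q j).rank (some s) < (Q j).rank none :=
    fun h => roundProfile_acc_iff.1 (hη.2.1.rank_lt_none h)
  have hassign := assigned_or_inTier (fun j s h => (hηs h).2.1) hsame
  have hIR : IndivRat (fun j => reshuffle t (Q j)) fun j => (η j).or (μ j) := by
    intro j
    rcases hj : η j with _ | s
    · simpa [hj] using hμ.2.1 j
    · simpa [hj] using (reshuffle_acc_iff.2 (hηs hj).2.2).le
  refine ⟨fun s => ?_, hIR, fun j s ⟨h1, h2⟩ => ?_⟩
  · rw [hassign]
    split_ifs
    exacts [hη.1 s, hμ.1 s]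
  have hsQ : (Q j).rank (some s) < (Q j).rank none :=
    reshuffle_acc_iff.1 (h1.trans_le (hIR j))
  beta_reduce at h1
  by_cases hs : t s = k + 1
  · refine hη.2.2 j s (blocks_of_assigned_eq ?_ h2 (by rw [hassign, if_pos hs]))
    rcases hj : η j with _ | s'
    · have hUj : U j := by
        refine (hU j).2 fun s0 hs0 => ?_
        rw [hj, Option.none_or, hs0] at h1
        have := tier_le_of_reshuffle_rank_lt (reshuffle_acc_iff.1 (hμ.2.1.rank_lt_none hs0)) h1
        omega
      exact roundProfile_acc_iff.2 ⟨hUj, hs, hsQ⟩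
    · obtain ⟨hUj, hs', hs'Q⟩ := hηs hj
      rw [hj, Option.some_or] at h1
      rw [roundProfile_rank_of_tier hUj hs, roundProfile_rank_of_tier hUj hs']
      exact (reshuffle_rank_lt_iff_of_tier_eq hsQ hs'Q (hs.trans hs'.symm)).1 h1
  · refine hμ.2.2 j s (blocks_of_assigned_eq ?_ h2 (by rw [hassign, if_neg hs]))
    rcases hj : η j with _ | s'
    · simpa [hj] using h1
    · obtain ⟨hUj, hs', hs'Q⟩ := hηs hj
      rw [hj, Option.some_or] at h1
      have := tier_le_of_reshuffle_rank_lt hs'Q h1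
      exact reshuffle_rank_lt_of_later hsQ fun s'' hs'' => by
        have := (hU j).1 hUj s'' hs''
        omega

theorem DA_roundProfile
    (hU : ∀ j, U j ↔ ∀ s, DA E (fun j => reshuffle t (Q j)) j = some s → k < t s) :
    DA E (roundProfile t Q k U) = inTier t (k + 1) (DA E fun j => reshuffle t (Q j)) := by
  set μ := DA E fun j => reshuffle t (Q j)
  set η := DA E (roundProfile t Q k U)
  have hν : Stable E _ (inTier t (k + 1) μ) := stable_roundProfile_inTier (DA_stable E _) hU
  have hsame : ∀ j, η j = none ↔ inTier t (k + 1) μ j = none := DA_eq_none_iff hν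
  have hΛ : Stable E _ fun j => (η j).or (μ j) :=
    stable_or (DA_stable E _) hU (DA_stable E _) hsame
  funext j
  refine (roundProfile t Q k U j).inj (le_antisymm (rank_DA_le hν j) ?_)
  rcases hj : η j with _ | s
  · rw [(hsame j).1 hj]
  obtain ⟨hUj, hs, hsQ⟩ := roundProfile_acc_iff.1 ((DA_stable E _).2.1.rank_lt_none hj)
  obtain ⟨s', hs'⟩ := Option.ne_none_iff_exists'.1 ((hsame j).not.1 (by simp [hj]))
  obtain ⟨hμs', hts'⟩ := inTier_eq_some_iff.1 hs'
  have hopt : (reshuffle t (Q j)).rank (μ j) ≤ (reshuffle t (Q j)).rank ((η j).or (μ j)) :=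
    rank_DA_le hΛ j
  rw [hj, hμs', Option.some_or] at hopt
  rw [hs', roundProfile_rank_of_tier hUj hs, roundProfile_rank_of_tier hUj hts']
  exact not_lt.1 fun h => not_lt.2 hopt <|
    (reshuffle_rank_lt_iff_of_tier_eq hsQ (reshuffle_acc_iff.1
      ((DA_stable E _).2.1.rank_lt_none hμs')) (hs.trans hts'.symm)).2 h

lemma TDAaux_eq_filter (hts : ∀ s, 1 ≤ t s) (k : ℕ) (i : I) :
    TDAaux E t Q k i = (DA E (fun j => reshuffle t (Q j)) i).filter (t · ≤ k) := by
  induction k generalizing i with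
  | zero =>
    rcases h : DA E (fun j => reshuffle t (Q j)) i with _ | s
    · rfl
    · have := hts s
      simp [TDAaux, Option.filter_some, show t s ≠ 0 by omega]
  | succ k ih =>
    have hU : ∀ j, TDAaux E t Q k j = none ↔
        ∀ s, DA E (fun j => reshuffle t (Q j)) j = some s → k < t s := by
      simp [ih, Option.filter_eq_none_iff]
    rw [TDAaux]
    change (match TDAaux E t Q k i with
      | some s => some s
      | none => DA E (roundProfile t Q k fun j => TDAaux E t Q k j = none) i) = _
    rw [DA_roundProfile hU, ih i, inTier]
    rcases DA E (fun j => reshuffle t (Q j)) i with _ | s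
    · rfl
    · simp only [Option.filter_some, decide_eq_true_eq]
      by_cases hk : t s ≤ k
      · simp [hk, show t s ≤ k + 1 by omega]
      · by_cases hk' : t s = k + 1
        · simp [hk']
        · simp [hk, hk']
          omega

theorem TDA_eq_DA_reshuffle (hts : ∀ s, 1 ≤ t s) :
    TDA E t Q = DA E fun j => reshuffle t (Q j) := by
  funext i
  rw [TDA, TDAaux_eq_filter hts]
  rcases DA E (fun j => reshuffle t (Q j)) i with _ | s
  · rfl
  · simp [le_sup (f := t) (mem_univ s)]

end Tiered

/-- If `Q` is a TDA Nash equilibrium, then under DA with the reshuffled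
profile, each student gets the same assignment as if he reported truthfully against the
others' reshuffled reports. -/
theorem DA_reshuffled_eq_truthful_deviation
    (E : Prio I S) (t : S → ℕ) (T : ℕ) (ht : IsTierStructure t T)
    (R Q : I → Pref S) (hQ : NashEq R (TDA E t) Q) (i : I) :
    DA E (fun j => reshuffle t (Q j)) i
      = DA E (Function.update (fun j => reshuffle t (Q j)) i (R i)) i := by
  have hts : ∀ s, 1 ≤ t s := fun s => (ht.1 s).1
  set P := fun j => reshuffle t (Q j)
  have hTDA : ∀ p, TDA E t (update Q i p) = DA E (update P i (reshuffle t p)) := by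
    intro p
    rw [TDA_eq_DA_reshuffle hts]
    congr 1
    funext j
    by_cases hj : j = i
    · subst hj; simp
    · simp [P, update_of_ne hj]
  set x := DA E (update P i (R i)) i
  have hx : (R i).rank x ≤ (R i).rank none := by
    simpa using (DA_stable E (update P i (R i))).2.1 i
  have hdev : TDA E t (update Q i (trunc (fun s => x = some s) (R i))) i = x := by
    rw [hTDA]
    simpa using DA_update_of_onlyAcceptable (P := update P i (R i)) rfl
      (onlyAcceptable_trunc hx).reshuffle
  have hnash := hQ i (trunc (fun s => x = some s) (R i))
  rw [hdev, TDA_eq_DA_reshuffle hts] at hnash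
  refine (R i).inj (le_antisymm hnash ?_)
  simpa using DA_strategyproof (P := update P i (R i)) (i := i) (P i)

end SchoolChoice
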